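/- Let (f_t)_{t∈[0,1]} be a W₁-geodesic between finitely supported f₀, f₁ on a connected locally finite graph G, and let (g_t) be a family on oriented edges with ∂f_t/∂t = −∇g_t and g_t ≥ 0 constructed via a spanning tree as in the paper. Then Σ_{(xy)∈E(G)} g_t(xy) = W₁(f₀,f₁) for every t ∈ [0,1]. -/

import Mathlib

open scoped BigOperators Classical

noncomputable section

variable {V : Type*}

/-- π is a coupling of the finitely supported distributions f₀ and f₁. -/
def IsCoupling (f₀ f₁ : V →₀ ℝ) (π : V × V →₀ ℝ) : Prop :=
  (∀ p, 0 ≤ π p) ∧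
    (∀ x, (π.sum fun p v => if p.1 = x then v else 0) = f₀ x) ∧
    (∀ y, (π.sum fun p v => if p.2 = y then v else 0) = f₁ y)

/-- Transport cost of a coupling, for the graph distance of G. -/
def gcost (G : SimpleGraph V) (π : V × V →₀ ℝ) : ℝ :=
  π.sum fun p v => (G.dist p.1 p.2 : ℝ) * v

/-- π is a W₁-optimal coupling of f₀ and f₁ on the graph G. -/
def IsOptimalCoupling (G : SimpleGraph V) (f₀ f₁ : V →₀ ℝ) (π : V × V →₀ ℝ) : Prop :=
  IsCoupling f₀ f₁ π ∧ ∀ π', IsCoupling f₀ f₁ π' → gcost G π ≤ gcost G π'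

/-- C(f₀,f₁): union of the supports of all W₁-optimal couplings. -/
def commonSupport (G : SimpleGraph V) (f₀ f₁ : V →₀ ℝ) : Set (V × V) :=
  {p | ∃ π, IsOptimalCoupling G f₀ f₁ π ∧ 0 < π p}

/-- f is a (finitely supported) probability distribution. -/
def IsProb (f : V →₀ ℝ) : Prop := (∀ x, 0 ≤ f x) ∧ (f.sum fun _ v => v) = 1

/-- γ(0),…,γ(n) is a geodesic of G of length n. -/
def IsGeodesic (G : SimpleGraph V) (γ : ℕ → V) (n : ℕ) : Prop :=
  (∀ i < n, G.Adj (γ i) (γ (i + 1))) ∧ G.dist (γ 0) (γ n) = n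

/-- The W₁-orientation: x → y if some geodesic with endpoint pair in C(f₀,f₁)
traverses the edge (x,y) in that direction. -/
def OrientedEdge (G : SimpleGraph V) (f₀ f₁ : V →₀ ℝ) (x y : V) : Prop :=
  ∃ (γ : ℕ → V) (n k : ℕ), IsGeodesic G γ n ∧
    (γ 0, γ n) ∈ commonSupport G f₀ f₁ ∧ k + 1 ≤ n ∧ γ k = x ∧ γ (k + 1) = y

/-- The Wasserstein distance W₁ on the graph G. -/
def W1 (G : SimpleGraph V) (f₀ f₁ : V →₀ ℝ) : ℝ :=
  sInf {c | ∃ π, IsCoupling f₀ f₁ π ∧ gcost G π = c}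

/-!
Rerouting mass of an optimal coupling along a cycle cannot lower its cost, so the union `C` of
the supports of all optimal couplings is cyclically monotone. Rockafellar's construction then
gives a Kantorovich potential: a `1`-Lipschitz `φ` with `φ a - φ b = d(a, b)` on `C`. Every
oriented edge lies on a geodesic between a pair of `C`, so `φ` drops by exactly `1` along it.

Let `H s = ∑ₓ φ x f_s(x)`. Any coupling shows `H s - H u ≤ W₁(f_s, f_u) = (u - s) W`, and an
optimal coupling of `f₀, f₁` gives `H 0 - H 1 = W`, where `W = W₁(f₀, f₁)`; hence `H` is affine
with slope `-W` on `[0, 1]`. Summing by parts, `H'(t) = -∑ (φ x - φ y) g_t(xy) = -∑ g_t(xy)`.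
-/

open Filter Topology

theorem Finsupp.apply_le_mapDomain_apply {α β : Type*} {π : α →₀ ℝ} (hπ : ∀ a, 0 ≤ π a)
    (h : α → β) (a : α) : π a ≤ π.mapDomain h (h a) := by
  have hterm : ∀ q, 0 ≤ (Finsupp.single (h q) (π q)) (h a) := fun q => by
    rw [Finsupp.single_apply]; split_ifs <;> simp [hπ q]
  rw [Finsupp.mapDomain, Finsupp.sum_apply, Finsupp.sum]
  by_cases ha : a ∈ π.support
  · exact (Finset.single_le_sum (fun q _ => hterm q) ha).trans_eq' (by simp)
  · rw [Finsupp.notMem_support_iff.1 ha]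
    exact Finset.sum_nonneg fun q _ => hterm q

theorem IsProb.le_one {f : V →₀ ℝ} (hf : IsProb f) (x : V) : f x ≤ 1 := by
  by_cases hx : x ∈ f.support
  · exact (Finset.single_le_sum (fun y _ => hf.1 y) hx).trans_eq hf.2
  · simp [Finsupp.notMem_support_iff.1 hx]

theorem isCoupling_iff {f₀ f₁ : V →₀ ℝ} {π : V × V →₀ ℝ} :
    IsCoupling f₀ f₁ π ↔
      (∀ p, 0 ≤ π p) ∧ π.mapDomain Prod.fst = f₀ ∧ π.mapDomain Prod.snd = f₁ := by
  have hmarg : ∀ (h : V × V → V) (x : V),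
      π.mapDomain h x = π.sum fun p v => if h p = x then v else 0 := by
    intro h x
    simp only [Finsupp.mapDomain, Finsupp.sum_apply, Finsupp.single_apply]
  simp only [IsCoupling, Finsupp.ext_iff, hmarg]

namespace IsCoupling

variable {f₀ f₁ : V →₀ ℝ} {π : V × V →₀ ℝ}

theorem apply_le_fst (h : IsCoupling f₀ f₁ π) (p : V × V) : π p ≤ f₀ p.1 :=
  (isCoupling_iff.1 h).2.1 ▸ Finsupp.apply_le_mapDomain_apply h.1 Prod.fst p

theorem apply_le_snd (h : IsCoupling f₀ f₁ π) (p : V × V) : π p ≤ f₁ p.2 :=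
  (isCoupling_iff.1 h).2.2 ▸ Finsupp.apply_le_mapDomain_apply h.1 Prod.snd p

theorem support_subset (h : IsCoupling f₀ f₁ π) : π.support ⊆ f₀.support ×ˢ f₁.support := by
  intro p hp
  have hpos : 0 < π p := (h.1 p).lt_of_ne (Ne.symm (Finsupp.mem_support_iff.1 hp))
  simp only [Finset.mem_product, Finsupp.mem_support_iff]
  exact ⟨(hpos.trans_le (h.apply_le_fst p)).ne', (hpos.trans_le (h.apply_le_snd p)).ne'⟩

end IsCoupling

def productCoupling (f₀ f₁ : V →₀ ℝ) : V × V →₀ ℝ :=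
  ∑ a ∈ f₀.support, ∑ b ∈ f₁.support, Finsupp.single (a, b) (f₀ a * f₁ b)

theorem isCoupling_productCoupling {f₀ f₁ : V →₀ ℝ} (h₀ : IsProb f₀) (h₁ : IsProb f₁) :
    IsCoupling f₀ f₁ (productCoupling f₀ f₁) := by
  have hs₀ : ∑ a ∈ f₀.support, f₀ a = 1 := h₀.2
  have hs₁ : ∑ b ∈ f₁.support, f₁ b = 1 := h₁.2
  refine isCoupling_iff.2 ⟨fun p => ?_, ?_, ?_⟩
  · simp only [productCoupling, Finsupp.finsetSum_apply, Finsupp.single_apply]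
    exact Finset.sum_nonneg fun a _ => Finset.sum_nonneg fun b _ => by
      split_ifs <;> simp [mul_nonneg (h₀.1 a) (h₁.1 b)]
  · conv_rhs => rw [← Finsupp.sum_single f₀]
    simp only [productCoupling, Finsupp.mapDomain_finsetSum, Finsupp.mapDomain_single,
      ← Finsupp.single_finsetSum, ← Finset.mul_sum, hs₁, mul_one, Finsupp.sum]
  · conv_rhs => rw [← Finsupp.sum_single f₁]
    rw [productCoupling, Finset.sum_comm]
    simp only [Finsupp.mapDomain_finsetSum, Finsupp.mapDomain_single,
      ← Finsupp.single_finsetSum, ← Finset.sum_mul, hs₀, one_mul, Finsupp.sum]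

theorem gcost_eq_linearCombination (G : SimpleGraph V) (π : V × V →₀ ℝ) :
    gcost G π = Finsupp.linearCombination ℝ (fun p : V × V => (G.dist p.1 p.2 : ℝ)) π := by
  simp only [gcost, Finsupp.linearCombination_apply, smul_eq_mul, mul_comm]

section W1

variable {G : SimpleGraph V} {f₀ f₁ : V →₀ ℝ} {π : V × V →₀ ℝ}

theorem IsCoupling.W1_le_gcost (h : IsCoupling f₀ f₁ π) : W1 G f₀ f₁ ≤ gcost G π := by
  refine csInf_le ⟨0, ?_⟩ ⟨π, h, rfl⟩
  rintro _ ⟨π', h', rfl⟩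
  exact Finset.sum_nonneg fun p _ => mul_nonneg (Nat.cast_nonneg _) (h'.1 p)

theorem IsOptimalCoupling.gcost_eq (h : IsOptimalCoupling G f₀ f₁ π) :
    gcost G π = W1 G f₀ f₁ :=
  le_antisymm (le_csInf ⟨_, π, h.1, rfl⟩ fun _ ⟨π', h', e⟩ => e ▸ h.2 π' h') h.1.W1_le_gcost

theorem IsCoupling.isOptimalCoupling (h : IsCoupling f₀ f₁ π)
    (hc : gcost G π ≤ W1 G f₀ f₁) : IsOptimalCoupling G f₀ f₁ π :=
  ⟨h, fun _ h' => hc.trans h'.W1_le_gcost⟩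

end W1

theorem exists_isOptimalCoupling (G : SimpleGraph V) {f₀ f₁ : V →₀ ℝ} (h₀ : IsProb f₀)
    (h₁ : IsProb f₁) : ∃ π, IsOptimalCoupling G f₀ f₁ π := by
  set P := f₀.support ×ˢ f₁.support
  -- couplings live on `P`, so we minimise over the finite-dimensional space `P → ℝ`
  let E : (P → ℝ) →ₗ[ℝ] V × V →₀ ℝ := Finsupp.lmapDomain ℝ ℝ Subtype.val ∘ₗ
    (Finsupp.linearEquivFunOnFinite ℝ ℝ P).symm.toLinearMap
  have hE : ∀ v (p : P), E v p = v p := fun v p => by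
    simp [E, Finsupp.mapDomain_apply Subtype.val_injective]
  have hE_restrict : ∀ π, IsCoupling f₀ f₁ π → E (fun p => π p) = π := by
    intro π hπ
    ext q
    by_cases hq : q ∈ P
    · exact hE _ ⟨q, hq⟩
    · rw [Finsupp.notMem_support_iff.1 fun h => hq (hπ.support_subset h)]
      exact Finsupp.mapDomain_of_notMem_range _ _ (by simpa using hq)
  have hcont : ∀ F : (V × V →₀ ℝ) →ₗ[ℝ] ℝ, Continuous fun v => F (E v) :=
    fun F => (F ∘ₗ E).continuous_of_finiteDimensional
  set S := {v : P → ℝ | IsCoupling f₀ f₁ (E v)}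
  have hS : S = (⋂ p, {v | 0 ≤ E v p}) ∩ (⋂ x, {v | (E v).mapDomain Prod.fst x = f₀ x}) ∩
      ⋂ y, {v | (E v).mapDomain Prod.snd y = f₁ y} := by
    ext v
    simp only [S, Set.mem_ofPred_eq, isCoupling_iff, Finsupp.ext_iff, Set.mem_inter_iff,
      Set.mem_iInter, and_assoc]
  have hS_closed : IsClosed S := by
    rw [hS]
    refine ((isClosed_iInter fun p => isClosed_le continuous_const
      (hcont (Finsupp.lapply p))).inter (isClosed_iInter fun x => isClosed_eq
      (hcont (Finsupp.lapply x ∘ₗ Finsupp.lmapDomain ℝ ℝ Prod.fst)) continuous_const)).inter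
      (isClosed_iInter fun y => isClosed_eq
      (hcont (Finsupp.lapply y ∘ₗ Finsupp.lmapDomain ℝ ℝ Prod.snd)) continuous_const)
  have hS_compact : IsCompact S := by
    refine (isCompact_univ_pi fun _ => isCompact_Icc (a := (0 : ℝ)) (b := 1)).of_isClosed_subset
      hS_closed fun v hv p _ => ?_
    rw [← hE v p]
    exact ⟨hv.1 p, (hv.apply_le_fst p).trans (h₀.le_one _)⟩
  have hS_ne : S.Nonempty := ⟨_, show IsCoupling f₀ f₁ (E _) by
    rw [hE_restrict _ (isCoupling_productCoupling h₀ h₁)]; exact isCoupling_productCoupling h₀ h₁⟩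
  obtain ⟨v, hv, hmin⟩ := hS_compact.exists_isMinOn (f := fun v => gcost G (E v)) hS_ne
    (by simpa only [gcost_eq_linearCombination] using (hcont _).continuousOn)
  refine ⟨E v, hv, fun π hπ => ?_⟩
  have hπS : (fun p : P => π p) ∈ S := by
    change IsCoupling f₀ f₁ (E _)
    rwa [hE_restrict π hπ]
  simpa only [Set.mem_ofPred_eq, hE_restrict π hπ] using hmin hπS

section Optimal

variable {G : SimpleGraph V} {f₀ f₁ : V →₀ ℝ} {π π' : V × V →₀ ℝ}

theorem IsOptimalCoupling.midpoint (h : IsOptimalCoupling G f₀ f₁ π)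
    (h' : IsOptimalCoupling G f₀ f₁ π') : IsOptimalCoupling G f₀ f₁ ((2⁻¹ : ℝ) • (π + π')) := by
  obtain ⟨hn, hfst, hsnd⟩ := isCoupling_iff.1 h.1
  obtain ⟨hn', hfst', hsnd'⟩ := isCoupling_iff.1 h'.1
  have hhalf : ∀ f : V →₀ ℝ, (2⁻¹ : ℝ) • (f + f) = f := fun f => by
    rw [← two_smul ℝ f, smul_smul, inv_mul_cancel₀ two_ne_zero, one_smul]
  refine IsCoupling.isOptimalCoupling (isCoupling_iff.2 ⟨fun p => ?_, ?_, ?_⟩) ?_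
  · simp only [Finsupp.smul_apply, Finsupp.add_apply, smul_eq_mul]
    linarith [hn p, hn' p]
  · rw [Finsupp.mapDomain_smul, Finsupp.mapDomain_add, hfst, hfst', hhalf]
  · rw [Finsupp.mapDomain_smul, Finsupp.mapDomain_add, hsnd, hsnd', hhalf]
  · rw [gcost_eq_linearCombination, map_smul, map_add, ← gcost_eq_linearCombination,
      ← gcost_eq_linearCombination, h.gcost_eq, h'.gcost_eq, smul_eq_mul]
    linarith

theorem exists_isOptimalCoupling_forall_pos (h₀ : IsProb f₀) (h₁ : IsProb f₁)
    (Q : Finset (V × V)) (hQ : ∀ p ∈ Q, p ∈ commonSupport G f₀ f₁) :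
    ∃ π, IsOptimalCoupling G f₀ f₁ π ∧ ∀ p ∈ Q, 0 < π p := by
  induction Q using Finset.induction_on with
  | empty => exact (exists_isOptimalCoupling G h₀ h₁).imp fun π hπ => ⟨hπ, by simp⟩
  | insert p Q _ ih =>
    obtain ⟨π, hπ, hpos⟩ := ih fun q hq => hQ q (Finset.mem_insert_of_mem hq)
    obtain ⟨π', hπ', hp⟩ := hQ p (Finset.mem_insert_self p Q)
    refine ⟨_, hπ.midpoint hπ', fun q hq => ?_⟩
    simp only [Finsupp.smul_apply, Finsupp.add_apply, smul_eq_mul]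
    rcases Finset.mem_insert.1 hq with rfl | hq
    · linarith [hπ.1.1 q]
    · linarith [hπ'.1.1 q, hpos q hq]

/-- Otherwise `π + ε • (ρ' - ρ)` would be a cheaper coupling for small `ε > 0`. -/
theorem IsOptimalCoupling.gcost_le_of_mapDomain_eq (hπ : IsOptimalCoupling G f₀ f₁ π)
    {ρ ρ' : V × V →₀ ℝ} (hρ : ∀ p ∈ ρ.support, 0 < π p) (hρ' : ∀ p, 0 ≤ ρ' p)
    (hfst : ρ.mapDomain Prod.fst = ρ'.mapDomain Prod.fst)
    (hsnd : ρ.mapDomain Prod.snd = ρ'.mapDomain Prod.snd) : gcost G ρ ≤ gcost G ρ' := by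
  obtain ⟨ε, hε, hεπ⟩ : ∃ ε > 0, ∀ p ∈ ρ.support, ε * ρ p ≤ π p := by
    have : ∀ᶠ ε in 𝓝[>] (0 : ℝ), ∀ p ∈ ρ.support, ε * ρ p ≤ π p :=
      (Filter.eventually_all_finset _).2 fun p hp => nhdsWithin_le_nhds <|
        ((continuous_id.mul continuous_const).tendsto' 0 0 (zero_mul _)).eventually
          (eventually_le_nhds (hρ p hp))
    exact (this.and self_mem_nhdsWithin).exists.imp fun ε h => ⟨h.2, h.1⟩
  obtain ⟨hn, hfst₀, hsnd₀⟩ := isCoupling_iff.1 hπ.1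
  have hcoup : IsCoupling f₀ f₁ (π + ε • (ρ' - ρ)) := by
    refine isCoupling_iff.2 ⟨fun p => ?_, ?_, ?_⟩
    · simp only [Finsupp.add_apply, Finsupp.smul_apply, Finsupp.sub_apply, smul_eq_mul]
      by_cases hp : p ∈ ρ.support
      · nlinarith [hεπ p hp, hρ' p]
      · rw [Finsupp.notMem_support_iff.1 hp]
        nlinarith [hn p, hρ' p]
    · rw [Finsupp.mapDomain_add, Finsupp.mapDomain_smul, Finsupp.mapDomain_sub, hfst, sub_self,
        smul_zero, add_zero, hfst₀]
    · rw [Finsupp.mapDomain_add, Finsupp.mapDomain_smul, Finsupp.mapDomain_sub, hsnd, sub_self,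
        smul_zero, add_zero, hsnd₀]
  have hcost := hπ.2 _ hcoup
  simp only [gcost_eq_linearCombination, map_add, map_smul, map_sub, smul_eq_mul] at hcost ⊢
  nlinarith

end Optimal

def listCost (G : SimpleGraph V) (L : List (V × V)) : ℝ :=
  (L.map fun p => (G.dist p.1 p.2 : ℝ)).sum

/-- Cyclical monotonicity for the cost `d`, phrased with arbitrary rearrangements of the two
coordinates instead of cyclic shifts of the second one. -/
def IsCyclicallyMonotone (G : SimpleGraph V) (Γ : Set (V × V)) : Prop :=
  ∀ L L' : List (V × V), (∀ p ∈ L, p ∈ Γ) → (L.map Prod.fst).Perm (L'.map Prod.fst) →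
    (L.map Prod.snd).Perm (L'.map Prod.snd) → listCost G L ≤ listCost G L'

theorem isCyclicallyMonotone_commonSupport (G : SimpleGraph V) {f₀ f₁ : V →₀ ℝ}
    (h₀ : IsProb f₀) (h₁ : IsProb f₁) : IsCyclicallyMonotone G (commonSupport G f₀ f₁) := by
  intro L L' hL hfst hsnd
  obtain ⟨π, hπ, hpos⟩ :=
    exists_isOptimalCoupling_forall_pos h₀ h₁ L.toFinset (by simpa using hL)
  let δ : List (V × V) → V × V →₀ ℝ := fun L => (L.map fun p => Finsupp.single p 1).sum
  have hmarg : ∀ (h : V × V → V) L,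
      (δ L).mapDomain h = ((L.map h).map fun x => Finsupp.single x (1 : ℝ)).sum := fun h L => by
    simpa [δ, List.map_map, Function.comp_def] using
      map_list_sum (Finsupp.mapDomain.addMonoidHom (M := ℝ) h) (L.map fun p => Finsupp.single p 1)
  have hcost : ∀ L, gcost G (δ L) = listCost G L := fun L => by
    simpa [δ, gcost_eq_linearCombination, listCost, List.map_map, Function.comp_def] using
      map_list_sum (Finsupp.linearCombination ℝ fun p : V × V => (G.dist p.1 p.2 : ℝ))
        (L.map fun p => Finsupp.single p 1)
  have happly : ∀ L p, δ L p = (L.map fun q => Finsupp.single q (1 : ℝ) p).sum := fun L p => by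
    simpa [δ, List.map_map, Function.comp_def] using
      map_list_sum (Finsupp.applyAddHom (M := ℝ) p) (L.map fun p => Finsupp.single p 1)
  rw [← hcost, ← hcost]
  refine hπ.gcost_le_of_mapDomain_eq (fun p hp => hpos p ?_) (fun p => ?_) ?_ ?_
  · by_contra hpL
    refine Finsupp.mem_support_iff.1 hp ?_
    rw [happly]
    exact List.sum_eq_zero fun x hx => by
      obtain ⟨q, hq, rfl⟩ := List.mem_map.1 hx
      exact Finsupp.single_eq_of_ne (by rintro rfl; exact hpL (List.mem_toFinset.2 hq))
  · rw [happly]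
    exact List.sum_nonneg fun x hx => by
      obtain ⟨q, -, rfl⟩ := List.mem_map.1 hx
      rw [Finsupp.single_apply]; split_ifs <;> norm_num
  · rw [hmarg, hmarg, (hfst.map _).sum_eq]
  · rw [hmarg, hmarg, (hsnd.map _).sum_eq]

theorem commonSupport_nonempty (G : SimpleGraph V) {f₀ f₁ : V →₀ ℝ} (h₀ : IsProb f₀)
    (h₁ : IsProb f₁) : (commonSupport G f₀ f₁).Nonempty := by
  obtain ⟨π, hπ⟩ := exists_isOptimalCoupling G h₀ h₁
  obtain ⟨p, hp⟩ : π.support.Nonempty := by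
    rw [Finsupp.support_nonempty_iff]
    rintro rfl
    have h := h₀.2
    rw [← (isCoupling_iff.1 hπ.1).2.1] at h
    simp at h
  exact ⟨p, π, hπ, (hπ.1.1 p).lt_of_ne (Finsupp.mem_support_iff.1 hp).symm⟩

section Potential

variable {G : SimpleGraph V} {Γ : Set (V × V)}

/-- The alternating cost `d(u,a₀) - d(a₀,b₀) + d(b₀,a₁) - ⋯ - d(aₘ,bₘ) + d(bₘ,x)` of
Rockafellar's chain from `u` to `x` through the pairs `(aᵢ, bᵢ)` of `l`. -/
def chainCost (G : SimpleGraph V) : V → List (V × V) → V → ℝ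
  | u, [], x => G.dist u x
  | u, p :: l, x => G.dist u p.1 - G.dist p.1 p.2 + chainCost G p.2 l x

theorem chainCost_le_add_dist (hconn : G.Connected) (u : V) (l : List (V × V)) (x y : V) :
    chainCost G u l y ≤ chainCost G u l x + G.dist x y := by
  induction l generalizing u with
  | nil => simp only [chainCost]; exact_mod_cast hconn.dist_triangle
  | cons p l ih => simp only [chainCost]; linarith [ih p.2]

theorem chainCost_append_singleton (u : V) (l : List (V × V)) (p : V × V) :
    chainCost G u (l ++ [p]) p.2 = chainCost G u l p.1 - G.dist p.1 p.2 := by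
  induction l generalizing u with
  | nil => simp [chainCost]
  | cons q l ih => simp only [List.cons_append, chainCost, ih]; ring

theorem chainCost_eq_listCost_sub (u : V) (l : List (V × V)) (x : V) :
    chainCost G u l x =
      listCost G ((l.map Prod.fst ++ [x]).zip (u :: l.map Prod.snd)) - listCost G l := by
  induction l generalizing u with
  | nil => simp [chainCost, listCost, SimpleGraph.dist_comm]
  | cons p l ih =>
    simp only [chainCost, ih, List.map_cons, List.cons_append, List.zip_cons_cons, listCost,
      List.sum_cons, SimpleGraph.dist_comm (u := u)]
    ring

theorem IsCyclicallyMonotone.dist_le_chainCost (hΓ : IsCyclicallyMonotone G Γ)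
    {l : List (V × V)} (hl : ∀ q ∈ l, q ∈ Γ) {p : V × V} (hp : p ∈ Γ) :
    G.dist p.1 p.2 ≤ chainCost G p.2 l p.1 := by
  have hcycle := hΓ (l ++ [p]) ((l.map Prod.fst ++ [p.1]).zip (p.2 :: l.map Prod.snd))
    (List.forall_mem_append.2 ⟨hl, List.forall_mem_singleton.2 hp⟩)
    (by rw [List.map_fst_zip (by simp)]; simp)
    (by rw [List.map_snd_zip (by simp)]; simp)
  rw [chainCost_eq_listCost_sub]
  simp only [listCost, List.map_append, List.sum_append, List.map_singleton, List.sum_singleton]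
    at hcycle ⊢
  linarith

def rockafellarPotential (G : SimpleGraph V) (Γ : Set (V × V)) (r x : V) : ℝ :=
  ⨅ l : {l : List (V × V) // ∀ p ∈ l, p ∈ Γ}, chainCost G r l x

instance : Nonempty {l : List (V × V) // ∀ p ∈ l, p ∈ Γ} := ⟨⟨[], by simp⟩⟩

/-- Closing a chain with a pair `(a, r) ∈ Γ` gives a cycle, so chain costs from `r` are bounded
below. -/
theorem rockafellarPotential_le_chainCost (hconn : G.Connected) (hΓ : IsCyclicallyMonotone G Γ)
    {a r : V} (har : (a, r) ∈ Γ) {l : List (V × V)} (hl : ∀ p ∈ l, p ∈ Γ) (x : V) :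
    rockafellarPotential G Γ r x ≤ chainCost G r l x := by
  refine ciInf_le (f := fun l : {l : List (V × V) // ∀ p ∈ l, p ∈ Γ} => chainCost G r l x)
    ⟨G.dist a r - G.dist x a, ?_⟩ ⟨l, hl⟩
  rintro _ ⟨l', rfl⟩
  linarith [hΓ.dist_le_chainCost l'.2 har, chainCost_le_add_dist hconn r l'.1 x a]

theorem IsCyclicallyMonotone.exists_potential (hconn : G.Connected)
    (hΓ : IsCyclicallyMonotone G Γ) (hne : Γ.Nonempty) :
    ∃ φ : V → ℝ, (∀ x y, φ x - φ y ≤ G.dist x y) ∧ ∀ p ∈ Γ, φ p.1 - φ p.2 = G.dist p.1 p.2 := by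
  obtain ⟨⟨a, r⟩, har⟩ := hne
  have hle := fun {l} hl x => rockafellarPotential_le_chainCost hconn hΓ har (l := l) hl x
  have hlip : ∀ x y, rockafellarPotential G Γ r x - rockafellarPotential G Γ r y ≤ G.dist x y := by
    intro x y
    rw [sub_le_comm, SimpleGraph.dist_comm]
    exact le_ciInf fun l : {l : List (V × V) // ∀ p ∈ l, p ∈ Γ} =>
      sub_le_iff_le_add.2 ((hle l.2 x).trans (chainCost_le_add_dist hconn r l.1 y x))
  refine ⟨rockafellarPotential G Γ r, hlip, fun p hp => le_antisymm (hlip _ _) ?_⟩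
  rw [le_sub_iff_add_le']
  refine le_ciInf fun l : {l : List (V × V) // ∀ p ∈ l, p ∈ Γ} => ?_
  rw [← le_sub_iff_add_le, ← chainCost_append_singleton]
  exact hle (List.forall_mem_append.2 ⟨l.2, List.forall_mem_singleton.2 hp⟩) p.2

end Potential

section Duality

variable {G : SimpleGraph V} {f₀ f₁ : V →₀ ℝ} {π : V × V →₀ ℝ}

theorem IsCoupling.linearCombination_sub (h : IsCoupling f₀ f₁ π) (φ : V → ℝ) :
    Finsupp.linearCombination ℝ φ f₀ - Finsupp.linearCombination ℝ φ f₁ =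
      π.sum fun p v => v * (φ p.1 - φ p.2) := by
  obtain ⟨-, hfst, hsnd⟩ := isCoupling_iff.1 h
  rw [← hfst, ← hsnd, Finsupp.linearCombination_mapDomain, Finsupp.linearCombination_mapDomain,
    Finsupp.linearCombination_apply, Finsupp.linearCombination_apply, Finsupp.sum, Finsupp.sum,
    Finsupp.sum, ← Finset.sum_sub_distrib]
  simp only [Function.comp_apply, smul_eq_mul, mul_sub]

theorem linearCombination_sub_le_W1 {φ : V → ℝ} (hφ : ∀ x y, φ x - φ y ≤ G.dist x y)
    (h₀ : IsProb f₀) (h₁ : IsProb f₁) :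
    Finsupp.linearCombination ℝ φ f₀ - Finsupp.linearCombination ℝ φ f₁ ≤ W1 G f₀ f₁ := by
  refine le_csInf ⟨_, _, isCoupling_productCoupling h₀ h₁, rfl⟩ ?_
  rintro _ ⟨π, hπ, rfl⟩
  rw [hπ.linearCombination_sub]
  exact Finset.sum_le_sum fun p _ => by
    dsimp only
    rw [mul_comm]
    exact mul_le_mul_of_nonneg_right (hφ _ _) (hπ.1 p)

theorem IsOptimalCoupling.linearCombination_sub_eq (hπ : IsOptimalCoupling G f₀ f₁ π)
    {φ : V → ℝ} (hφ : ∀ p ∈ commonSupport G f₀ f₁, φ p.1 - φ p.2 = G.dist p.1 p.2) :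
    Finsupp.linearCombination ℝ φ f₀ - Finsupp.linearCombination ℝ φ f₁ = W1 G f₀ f₁ := by
  rw [hπ.1.linearCombination_sub, ← hπ.gcost_eq]
  refine Finset.sum_congr rfl fun p hp => ?_
  dsimp only
  rw [hφ p ⟨π, hπ, (hπ.1.1 p).lt_of_ne (Finsupp.mem_support_iff.1 hp).symm⟩, mul_comm]

end Duality

section Graph

variable {G : SimpleGraph V}

theorem SimpleGraph.Connected.finite_setOf_dist_le (hconn : G.Connected) [G.LocallyFinite]
    (a : V) (R : ℕ) : {x | G.dist x a ≤ R}.Finite := by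
  induction R with
  | zero => simp [hconn.dist_eq_zero_iff]
  | succ R ih =>
    refine (ih.biUnion fun y _ => (G.neighborSet y).toFinite.insert y).subset fun x hx => ?_
    obtain ⟨p, hp⟩ := hconn.exists_walk_length_eq_dist x a
    cases p with
    | nil => exact Set.mem_biUnion (x := a) (by simp) (Set.mem_insert a _)
    | cons h q =>
      refine Set.mem_biUnion ?_ (Set.mem_insert_of_mem _ h.symm)
      have := G.dist_le q
      simp only [Set.mem_ofPred_eq, SimpleGraph.Walk.length_cons] at hp hx ⊢
      omega

theorem SimpleGraph.Connected.dist_le_of_adj_succ (hconn : G.Connected) {γ : ℕ → V} {n : ℕ}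
    (hadj : ∀ i < n, G.Adj (γ i) (γ (i + 1))) {i : ℕ} (hi : i ≤ n) : G.dist (γ i) (γ 0) ≤ i := by
  induction i with
  | zero => simp
  | succ i ih =>
    have hstep : G.dist (γ (i + 1)) (γ i) = 1 :=
      SimpleGraph.dist_eq_one_iff_adj.2 (hadj i (by omega)).symm
    have := ih (by omega)
    have := hconn.dist_triangle (u := γ (i + 1)) (v := γ i) (w := γ 0)
    omega

theorem exists_finset_forall_orientedEdge_mem (hconn : G.Connected) [G.LocallyFinite]
    (f₀ f₁ : V →₀ ℝ) :
    ∃ K : Finset V, f₀.support ⊆ K ∧ ∀ x y, OrientedEdge G f₀ f₁ x y → x ∈ K ∧ y ∈ K := by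
  set D := (f₀.support ×ˢ f₁.support).sup fun p => G.dist p.1 p.2
  have hfin : (⋃ a ∈ f₀.support, {x | G.dist x a ≤ D}).Finite :=
    f₀.support.finite_toSet.biUnion fun a _ => hconn.finite_setOf_dist_le a D
  refine ⟨hfin.toFinset, fun a ha => hfin.mem_toFinset.2 (Set.mem_biUnion ha (by simp)), ?_⟩
  rintro _ _ ⟨γ, n, k, hγ, ⟨π, hπ, hpos⟩, hk, rfl, rfl⟩
  have hmem := hπ.1.support_subset (Finsupp.mem_support_iff.2 hpos.ne')
  have hnD : n ≤ D := hγ.2 ▸ Finset.le_sup (f := fun p : V × V => G.dist p.1 p.2) hmem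
  have hball : ∀ i ≤ n, γ i ∈ hfin.toFinset := fun i hi =>
    hfin.mem_toFinset.2 <| Set.mem_biUnion (Finset.mem_product.1 hmem).1
      ((hconn.dist_le_of_adj_succ hγ.1 hi).trans (hi.trans hnD))
  exact ⟨hball k (by omega), hball (k + 1) hk⟩

/-- The edge lies on a geodesic between a pair of `commonSupport`, along which `φ` drops by the
full length of the geodesic, hence by one at every step. -/
theorem OrientedEdge.sub_eq_one {f₀ f₁ : V →₀ ℝ} {φ : V → ℝ}
    (hφ : ∀ x y, φ x - φ y ≤ G.dist x y)
    (hC : ∀ p ∈ commonSupport G f₀ f₁, φ p.1 - φ p.2 = G.dist p.1 p.2) {x y : V}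
    (h : OrientedEdge G f₀ f₁ x y) : φ x - φ y = 1 := by
  obtain ⟨γ, n, k, hγ, hγC, hk, rfl, rfl⟩ := h
  have hstep : ∀ i ∈ Finset.range n, φ (γ i) - φ (γ (i + 1)) ≤ 1 := fun i hi =>
    (hφ _ _).trans <| by
      rw [SimpleGraph.dist_eq_one_iff_adj.2 (hγ.1 i (Finset.mem_range.1 hi))]
      simp
  have hsum : ∑ i ∈ Finset.range n, (φ (γ i) - φ (γ (i + 1))) = ∑ i ∈ Finset.range n, 1 := by
    rw [Finset.sum_range_sub', hC _ hγC, hγ.2]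
    simp
  exact (Finset.sum_eq_sum_iff_of_le hstep).1 hsum k (Finset.mem_range.2 hk)

end Graph

theorem HasDerivAt.eq_of_forall_mul_sub_le_sub {H : ℝ → ℝ} {a b c d t : ℝ} (hab : a < b)
    (ht : t ∈ Set.Icc a b) (hd : HasDerivAt H d t)
    (hle : ∀ s ∈ Set.Icc a b, ∀ u ∈ Set.Icc a b, s ≤ u → c * (u - s) ≤ H u - H s)
    (heq : H b - H a = c * (b - a)) : d = c := by
  have haff : ∀ s ∈ Set.Icc a b, H s = H a + c * (s - a) := fun s hs => by
    have h1 := hle a (Set.left_mem_Icc.2 hab.le) s hs hs.1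
    have h2 := hle s hs b (Set.right_mem_Icc.2 hab.le) hs.2
    linarith
  have hc : HasDerivWithinAt H c (Set.Icc a b) t := by
    have := (((hasDerivAt_id t).sub_const a).const_mul c).const_add (H a)
    simpa using this.hasDerivWithinAt.congr haff (haff t ht)
  exact (uniqueDiffOn_Icc hab t ht).eq_deriv _ hd.hasDerivWithinAt hc

section ContinuityEquation

variable {K : Finset V}

theorem sum_mul_netFlux_eq_finsum (φ : V → ℝ) {g : V × V → ℝ}
    (hgK : ∀ p, g p ≠ 0 → p.1 ∈ K ∧ p.2 ∈ K) :
    ∑ x ∈ K, φ x * ((∑ᶠ y, g (x, y)) - ∑ᶠ z, g (z, x)) = ∑ᶠ p, (φ p.1 - φ p.2) * g p := by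
  have hout : ∀ x, ∑ᶠ y, g (x, y) = ∑ y ∈ K, g (x, y) := fun x =>
    finsum_eq_sum_of_support_subset _ fun y hy => (hgK _ hy).2
  have hin : ∀ x, ∑ᶠ z, g (z, x) = ∑ z ∈ K, g (z, x) := fun x =>
    finsum_eq_sum_of_support_subset _ fun z hz => (hgK _ hz).1
  rw [finsum_eq_sum_of_support_subset (s := K ×ˢ K) _ fun p hp =>
    Finset.mem_product.2 (hgK p (right_ne_zero_of_mul hp))]
  simp only [hout, hin, mul_sub, Finset.mul_sum, sub_mul, Finset.sum_sub_distrib,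
    Finset.sum_product]
  rw [Finset.sum_comm (s := K) (t := K) (f := fun x z => φ x * g (z, x))]

theorem support_subset_of_hasDerivAt_netFlux {f : ℝ → V →₀ ℝ} {g : ℝ → V × V → ℝ} {a b : ℝ}
    (hgK : ∀ s p, g s p ≠ 0 → p.1 ∈ K ∧ p.2 ∈ K)
    (hdiv : ∀ x, ∀ s ∈ Set.Icc a b,
      HasDerivAt (fun s => f s x) (-((∑ᶠ y, g s (x, y)) - ∑ᶠ z, g s (z, x))) s)
    (ha : (f a).support ⊆ K) {s : ℝ} (hs : s ∈ Set.Icc a b) : (f s).support ⊆ K := by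
  intro x hx
  by_contra hxK
  have hflux : ∀ s, (∑ᶠ y, g s (x, y)) - ∑ᶠ z, g s (z, x) = 0 := fun s => by
    rw [finsum_eq_zero_of_forall_eq_zero fun y => not_not.1 fun h => hxK (hgK s _ h).1,
      finsum_eq_zero_of_forall_eq_zero fun z => not_not.1 fun h => hxK (hgK s _ h).2, sub_zero]
  have hconst := constant_of_has_deriv_right_zero (f := fun s => f s x)
    (fun s hs => (hdiv x s hs).continuousAt.continuousWithinAt)
    (fun s hs => by simpa [hflux] using (hdiv x s (Set.Ico_subset_Icc_self hs)).hasDerivWithinAt)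
    s hs
  exact Finsupp.mem_support_iff.1 hx
    (hconst.trans (Finsupp.notMem_support_iff.1 fun h => hxK (ha h)))

end ContinuityEquation

theorem total_flux_eq_W1_general
    (G : SimpleGraph V) (hconn : G.Connected) [G.LocallyFinite]
    (f₀ f₁ : V →₀ ℝ) (h₀ : IsProb f₀) (h₁ : IsProb f₁)
    (f : ℝ → V →₀ ℝ) (hf0 : f 0 = f₀) (hf1 : f 1 = f₁)
    (hprob : ∀ t ∈ Set.Icc (0 : ℝ) 1, IsProb (f t))
    (hW : ∀ s t : ℝ, 0 ≤ s → s ≤ t → t ≤ 1 → W1 G (f s) (f t) = (t - s) * W1 G f₀ f₁)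
    (T : SimpleGraph V)
    (g : ℝ → V × V → ℝ)
    (hgsupp : ∀ t p, g t p ≠ 0 → OrientedEdge G f₀ f₁ p.1 p.2 ∧ T.Adj p.1 p.2)
    (hdiv : ∀ (x : V), ∀ t ∈ Set.Icc (0 : ℝ) 1,
      HasDerivAt (fun s => f s x) (-((∑ᶠ y, g t (x, y)) - ∑ᶠ z, g t (z, x))) t)
    (t : ℝ) (ht : t ∈ Set.Icc (0 : ℝ) 1) :
    ∑ᶠ p : V × V, g t p = W1 G f₀ f₁ := by
  obtain ⟨φ, hφ, hφC⟩ := (isCyclicallyMonotone_commonSupport G h₀ h₁).exists_potential hconn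
    (commonSupport_nonempty G h₀ h₁)
  obtain ⟨K, hK₀, hK⟩ := exists_finset_forall_orientedEdge_mem hconn f₀ f₁
  have hgK : ∀ s p, g s p ≠ 0 → p.1 ∈ K ∧ p.2 ∈ K := fun s p hp => hK _ _ (hgsupp s p hp).1
  -- a sum over the fixed finite set `K`, hence differentiable everywhere; it is the pairing of
  -- `φ` with `f s` only for `s ∈ [0, 1]`
  set H : ℝ → ℝ := fun s => ∑ x ∈ K, φ x * f s x
  have hH : ∀ s ∈ Set.Icc (0 : ℝ) 1, H s = Finsupp.linearCombination ℝ φ (f s) := fun s hs => by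
    rw [Finsupp.linearCombination_apply, Finsupp.sum_of_support_subset _
      (support_subset_of_hasDerivAt_netFlux hgK hdiv (hf0 ▸ hK₀) hs) _ (by simp)]
    simp only [H, smul_eq_mul, mul_comm]
  have hderiv : HasDerivAt H (-∑ᶠ p, (φ p.1 - φ p.2) * g t p) t := by
    rw [← sum_mul_netFlux_eq_finsum φ (hgK t), ← Finset.sum_neg_distrib]
    exact HasDerivAt.fun_sum fun x _ => by
      simpa only [mul_neg] using (hdiv x t ht).const_mul (φ x)
  have hslope := hderiv.eq_of_forall_mul_sub_le_sub zero_lt_one ht (c := -W1 G f₀ f₁)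
    (fun s hs u hu hsu => by
      have := linearCombination_sub_le_W1 hφ (hprob s hs) (hprob u hu)
      rw [hW s u hs.1 hsu hu.2, ← hH s hs, ← hH u hu] at this
      linarith)
    (by
      obtain ⟨π, hπ⟩ := exists_isOptimalCoupling G h₀ h₁
      linarith [hπ.linearCombination_sub_eq hφC, hf0 ▸ hH 0 (by simp), hf1 ▸ hH 1 (by simp)])
  have hflux : ∀ p, (φ p.1 - φ p.2) * g t p = g t p := fun p => by
    by_cases hp : g t p = 0
    · simp [hp]
    · rw [(hgsupp t p hp).1.sub_eq_one hφ hφC, one_mul]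
  simp only [hflux] at hslope
  linarith

theorem total_flux_eq_W1
    (G : SimpleGraph V) (hconn : G.Connected) [G.LocallyFinite]
    (f₀ f₁ : V →₀ ℝ) (h₀ : IsProb f₀) (h₁ : IsProb f₁)
    (f : ℝ → V →₀ ℝ) (hf0 : f 0 = f₀) (hf1 : f 1 = f₁)
    (hprob : ∀ t ∈ Set.Icc (0 : ℝ) 1, IsProb (f t))
    (hW : ∀ s t : ℝ, 0 ≤ s → s ≤ t → t ≤ 1 → W1 G (f s) (f t) = (t - s) * W1 G f₀ f₁)
    (T : SimpleGraph V) (hTG : T ≤ G) (hT : T.IsTree)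
    (g : ℝ → V × V → ℝ)
    (hgsupp : ∀ t p, g t p ≠ 0 → OrientedEdge G f₀ f₁ p.1 p.2 ∧ T.Adj p.1 p.2)
    (hgpos : ∀ t p, 0 ≤ g t p)
    (hdiv : ∀ (x : V), ∀ t ∈ Set.Icc (0 : ℝ) 1,
      HasDerivAt (fun s => f s x) (-((∑ᶠ y, g t (x, y)) - ∑ᶠ z, g t (z, x))) t)
    (t : ℝ) (ht : t ∈ Set.Icc (0 : ℝ) 1) :
    ∑ᶠ p : V × V, g t p = W1 G f₀ f₁ :=
  total_flux_eq_W1_general G hconn f₀ f₁ h₀ h₁ f hf0 hf1 hprob hW T g hgsupp hdiv t ht
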